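/- For any power series P, Q ∈ A[[x]] with Q(0) a unit, and the sequence defined by P_0 = P, Q_0 = Q, and (P_{k+1}, Q_{k+1}) obtained from a Graeffe step (Q_{k+1}(x²) = Q_k(x)Q_k(-x), and P_{k+1} the appropriate even or odd part of P_k(x)Q_k(-x) according to the parity of the current index N_k, N_{k+1} = ⌊N_k/2⌋), one has [x^{N_k}](P_k/Q_k) = [x^{N_0}](P_0/Q_0) for all k. -/

import Mathlib

/-! Since `Q(x) Q(-x)` is even, it is `V(x²)` for `V = Q₁`. Splitting `U = P(x) Q(-x)`
as `E(x²) + x O(x²)` gives `P / Q = U / V(x²) = (E / V)(x²) + x (O / V)(x²)`, so the coefficient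
of `x^N` in `P / Q` is the coefficient of `x^⌊N/2⌋` in `E / V` or in `O / V`, according to the
parity of `N`. This is one step of the iteration; the theorem follows by induction on `k`. -/

/-- Even part: `Σ_i ([x^{2i}]U) x^i`. -/
noncomputable def evenPart {R : Type*} [CommRing R] (U : PowerSeries R) : PowerSeries R :=
  PowerSeries.mk fun n => PowerSeries.coeff (2 * n) U

/-- Odd part: `Σ_i ([x^{2i+1}]U) x^i`. -/
noncomputable def oddPart {R : Type*} [CommRing R] (U : PowerSeries R) : PowerSeries R :=
  PowerSeries.mk fun n => PowerSeries.coeff (2 * n + 1) U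

/-- One Graeffe halving step on state `(P, Q, N)`:
`Q ← ` the `V` with `V(x²) = Q(x)Q(-x)` (even part of `Q(x)Q(-x)`),
`P ← ` even or odd part of `P(x)Q(-x)` according to the parity of `N`, `N ← ⌊N/2⌋`. -/
noncomputable def graeffeStep {A : Type*} [CommRing A]
    (s : PowerSeries A × PowerSeries A × ℕ) : PowerSeries A × PowerSeries A × ℕ :=
  let U := s.1 * PowerSeries.rescale (-1) s.2.1
  (if s.2.2 % 2 = 0 then evenPart U else oddPart U,
   evenPart (s.2.1 * PowerSeries.rescale (-1) s.2.1),
   s.2.2 / 2)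

open PowerSeries
open scoped Ring

section EvenOddParts

variable {R : Type*} [CommRing R]

theorem coeff_expand_two_add_X_mul_expand_two (f g : PowerSeries R) (n : ℕ) :
    coeff n (expand 2 two_ne_zero f + X * expand 2 two_ne_zero g) =
      coeff (n / 2) (if n % 2 = 0 then f else g) := by
  obtain ⟨m, rfl | rfl⟩ := Nat.even_or_odd' n
  · rw [if_pos (by omega), Nat.mul_div_cancel_left _ two_pos, map_add, coeff_expand_mul]
    rcases m with _ | m
    · simp
    · rw [show 2 * (m + 1) = 2 * m + 1 + 1 by ring, coeff_succ_X_mul,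
        coeff_expand_of_not_dvd _ _ _ (by omega), add_zero]
  · rw [if_neg (by omega), show (2 * m + 1) / 2 = m by omega, map_add, coeff_succ_X_mul,
      coeff_expand_mul, coeff_expand_of_not_dvd _ _ _ (by omega), zero_add]

theorem expand_evenPart_add_X_mul_expand_oddPart (f : PowerSeries R) :
    expand 2 two_ne_zero (evenPart f) + X * expand 2 two_ne_zero (oddPart f) = f := by
  ext n
  rw [coeff_expand_two_add_X_mul_expand_two]
  obtain ⟨m, rfl | rfl⟩ := Nat.even_or_odd' n
  · simp [evenPart]
  · simp [oddPart, show (2 * m + 1) / 2 = m by omega]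

theorem oddPart_mul_rescale_neg_one_self (f : PowerSeries R) :
    oddPart (f * rescale (-1) f) = 0 := by
  ext n
  rw [oddPart, coeff_mk, coeff_mul, map_zero]
  -- the terms of indices (i, j) and (j, i) cancel, as i and j have opposite parities
  refine Finset.sum_involution (fun p _ => p.swap) (fun p hp => ?_) (fun p hp _ h => ?_)
    (fun p hp => by simpa [add_comm] using hp) (fun p _ => rfl)
  · rw [Finset.HasAntidiagonal.mem_antidiagonal] at hp
    have hsign : (-1 : R) ^ p.1 = -(-1) ^ p.2 := by
      rw [← neg_one_mul ((-1 : R) ^ p.2), ← pow_succ', neg_one_pow_eq_pow_mod_two,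
        neg_one_pow_eq_pow_mod_two (n := p.2 + 1), show p.1 % 2 = (p.2 + 1) % 2 by omega]
    simp only [coeff_rescale, Prod.fst_swap, Prod.snd_swap, hsign]
    ring
  · rw [Finset.HasAntidiagonal.mem_antidiagonal] at hp
    have := congrArg Prod.fst h
    simp only [Prod.fst_swap] at this
    omega

theorem expand_evenPart_mul_rescale_neg_one_self (f : PowerSeries R) :
    expand 2 two_ne_zero (evenPart (f * rescale (-1) f)) = f * rescale (-1) f := by
  conv_rhs => rw [← expand_evenPart_add_X_mul_expand_oddPart (f * rescale (-1) f),
    oddPart_mul_rescale_neg_one_self, map_zero, mul_zero, add_zero]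

end EvenOddParts

theorem map_ringInverse {M N F : Type*} [MonoidWithZero M] [MonoidWithZero N] [FunLike F M N]
    [MonoidHomClass F M N] (f : F) {a : M} (ha : IsUnit a) : f a⁻¹ʳ = (f a)⁻¹ʳ := by
  rw [← one_mul (f a)⁻¹ʳ, Ring.eq_mul_inverse_iff_mul_eq _ _ _ (ha.map f), ← map_mul,
    Ring.inverse_mul_cancel _ ha, map_one]

section GraeffeStep

variable {A : Type*} [CommRing A] {P Q : PowerSeries A} {N : ℕ}

theorem isUnit_evenPart_mul_rescale_neg_one_self (hQ : IsUnit Q) :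
    IsUnit (evenPart (Q * rescale (-1) Q)) := by
  rw [isUnit_iff_constantCoeff, ← constantCoeff_expand 2 two_ne_zero,
    expand_evenPart_mul_rescale_neg_one_self, ← isUnit_iff_constantCoeff]
  exact hQ.mul (hQ.map _)

theorem coeff_graeffeStep (hQ : IsUnit Q) :
    coeff (graeffeStep (P, Q, N)).2.2
        ((graeffeStep (P, Q, N)).1 * (graeffeStep (P, Q, N)).2.1⁻¹ʳ) =
      coeff N (P * Q⁻¹ʳ) := by
  set U := P * rescale (-1) Q
  set V := evenPart (Q * rescale (-1) Q)
  have hquot : P * Q⁻¹ʳ = expand 2 two_ne_zero (evenPart U * V⁻¹ʳ) +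
      X * expand 2 two_ne_zero (oddPart U * V⁻¹ʳ) :=
    calc P * Q⁻¹ʳ = U * (Q * rescale (-1) Q)⁻¹ʳ := by
          rw [Ring.inverse_mul (.inl hQ), ← mul_assoc, mul_assoc P,
            Ring.mul_inverse_cancel _ (hQ.map _), mul_one]
      _ = U * expand 2 two_ne_zero V⁻¹ʳ := by
          rw [map_ringInverse _ (isUnit_evenPart_mul_rescale_neg_one_self hQ),
            expand_evenPart_mul_rescale_neg_one_self]
      _ = _ := by
          conv_lhs => rw [← expand_evenPart_add_X_mul_expand_oddPart U]
          rw [map_mul, map_mul, add_mul, mul_assoc]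
  rw [hquot, coeff_expand_two_add_X_mul_expand_two, ← ite_mul]
  rfl

end GraeffeStep

/-- Along the Graeffe iteration `(P_k, Q_k, N_k)` starting from `(P, Q, N)`
with `Q(0)` a unit, the extracted coefficient is invariant:
`[x^{N_k}](P_k/Q_k) = [x^N](P/Q)` for all `k`. -/
theorem graeffe_iteration_invariant
    {A : Type*} [CommRing A] (P Q : PowerSeries A)
    (hQ0 : IsUnit (PowerSeries.constantCoeff Q)) (N : ℕ) :
    ∀ k : ℕ,
      PowerSeries.coeff ((graeffeStep^[k] (P, Q, N)).2.2)
          ((graeffeStep^[k] (P, Q, N)).1 * Ring.inverse (graeffeStep^[k] (P, Q, N)).2.1) =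
        PowerSeries.coeff N (P * Ring.inverse Q) := by
  intro k
  induction k generalizing P Q N with
  | zero => rfl
  | succ k ih =>
    have hQ := isUnit_iff_constantCoeff.2 hQ0
    have hQ₁ := isUnit_evenPart_mul_rescale_neg_one_self hQ
    rw [Function.iterate_succ_apply,
      ih _ (graeffeStep (P, Q, N)).2.1 (isUnit_iff_constantCoeff.1 hQ₁), coeff_graeffeStep hQ]
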